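/- Let (H,R,χ) be a pre-Cartier quasitriangular bialgebra. Then χ is a Hochschild 2-cocycle of the coalgebra H, i.e. χ₁₂ + (Δ⊗Id)(χ) = χ₂₃ + (Id⊗Δ)(χ) in H⊗H⊗H. -/

import Mathlib

open scoped TensorProduct

noncomputable section

variable (k H : Type*) [CommRing k] [Ring H] [Bialgebra k H]

/-- leg embedding `a ⊗ b ↦ a ⊗ b ⊗ 1` into `H ⊗ (H ⊗ H)`. -/
def leg12 : H ⊗[k] H →ₐ[k] H ⊗[k] (H ⊗[k] H) :=
  Algebra.TensorProduct.map (AlgHom.id k H) Algebra.TensorProduct.includeLeft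

/-- leg embedding `a ⊗ b ↦ 1 ⊗ a ⊗ b`. -/
def leg23 : H ⊗[k] H →ₐ[k] H ⊗[k] (H ⊗[k] H) :=
  Algebra.TensorProduct.includeRight

/-- leg embedding `a ⊗ b ↦ a ⊗ 1 ⊗ b`. -/
def leg13 : H ⊗[k] H →ₐ[k] H ⊗[k] (H ⊗[k] H) :=
  Algebra.TensorProduct.map (AlgHom.id k H) Algebra.TensorProduct.includeRight

/-- `(Id ⊗ Δ)` as an algebra map `H ⊗ H → H ⊗ (H ⊗ H)`. -/
def idComul : H ⊗[k] H →ₐ[k] H ⊗[k] (H ⊗[k] H) :=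
  Algebra.TensorProduct.map (AlgHom.id k H) (Bialgebra.comulAlgHom k H)

/-- `(Δ ⊗ Id)` as an algebra map `H ⊗ H → H ⊗ (H ⊗ H)` (after reassociation). -/
def comulId : H ⊗[k] H →ₐ[k] H ⊗[k] (H ⊗[k] H) :=
  (Algebra.TensorProduct.assoc k k k H H H).toAlgHom.comp
    (Algebra.TensorProduct.map (Bialgebra.comulAlgHom k H) (AlgHom.id k H))

/-- the flip `a ⊗ b ↦ b ⊗ a` as an algebra map. -/
def swapT : H ⊗[k] H →ₐ[k] H ⊗[k] H := (Algebra.TensorProduct.comm k H H).toAlgHom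

/-- A quasitriangular structure on the bialgebra `H`. -/
structure QT where
  R : H ⊗[k] H
  Rinv : H ⊗[k] H
  mul_inv : R * Rinv = 1
  inv_mul : Rinv * R = 1
  quasi_cocomm : ∀ h : H, swapT k H (Coalgebra.comul (R := k) h) * R = R * Coalgebra.comul (R := k) h
  hex1 : idComul k H R = leg13 k H R * leg12 k H R
  hex2 : comulId k H R = leg13 k H R * leg23 k H R

/-- A pre-Cartier quasitriangular bialgebra structure on `H`. -/
structure PreCartier extends QT k H where
  χ : H ⊗[k] H
  chi_comm : ∀ h : H, χ * Coalgebra.comul (R := k) h = Coalgebra.comul (R := k) h * χ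
  chi_hex1 : idComul k H χ = leg12 k H χ + leg12 k H Rinv * leg13 k H χ * leg12 k H R
  chi_hex2 : comulId k H χ = leg23 k H χ + leg23 k H Rinv * leg13 k H χ * leg23 k H R

/-!
Substituting the two `χ`-hexagons, the cocycle identity reduces to
`R₂₃⁻¹ χ₁₃ R₂₃ = R₁₂⁻¹ χ₁₃ R₁₂`. To see this, flip legs 2 and 3 in the first hexagon and
multiply by `R₂₃` on the right: quasi-cocommutativity moves `R₂₃` past `(Id ⊗ Δ)(χ)`, while
`R₁₃⁻¹ χ₁₂ R₁₃ R₂₃ = R₂₃ χ₁₂` because `χ` commutes with the image of `Δ`, in particular with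
`(Δ ⊗ Id)(R) = R₁₃ R₂₃`. Cancelling `R₂₃ χ₁₂` leaves `χ₁₃ R₂₃ = R₂₃ R₁₂⁻¹ χ₁₃ R₁₂`.
-/

def swap23 : H ⊗[k] (H ⊗[k] H) →ₐ[k] H ⊗[k] (H ⊗[k] H) :=
  Algebra.TensorProduct.map (AlgHom.id k H) (Algebra.TensorProduct.comm k H H).toAlgHom

variable {k H}

lemma swap23_leg12 (x : H ⊗[k] H) : swap23 k H (leg12 k H x) = leg13 k H x := by
  induction x using TensorProduct.induction_on with
  | zero => simp
  | tmul a b => simp [swap23, leg12, leg13]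
  | add x y hx hy => simp only [map_add, hx, hy]

lemma swap23_leg13 (x : H ⊗[k] H) : swap23 k H (leg13 k H x) = leg12 k H x := by
  induction x using TensorProduct.induction_on with
  | zero => simp
  | tmul a b => simp [swap23, leg12, leg13]
  | add x y hx hy => simp only [map_add, hx, hy]

lemma leg12_eq_assoc (x : H ⊗[k] H) :
    leg12 k H x = Algebra.TensorProduct.assoc k k k H H H (x ⊗ₜ 1) := by
  induction x using TensorProduct.induction_on with
  | zero => simp
  | tmul a b => simp [leg12]
  | add x y hx hy => simp only [map_add, hx, hy, TensorProduct.add_tmul]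

lemma comulId_tmul (a b : H) :
    comulId k H (a ⊗ₜ b) =
      Algebra.TensorProduct.assoc k k k H H H (Coalgebra.comul (R := k) a ⊗ₜ b) := by
  simp [comulId]

lemma idComul_tmul (a b : H) : idComul k H (a ⊗ₜ b) = a ⊗ₜ Coalgebra.comul (R := k) b := by
  simp [idComul]

lemma swap23_idComul_mul_leg23 {r : H ⊗[k] H}
    (hr : ∀ h : H, swapT k H (Coalgebra.comul (R := k) h) * r = r * Coalgebra.comul (R := k) h)
    (x : H ⊗[k] H) :
    swap23 k H (idComul k H x) * leg23 k H r = leg23 k H r * idComul k H x := by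
  induction x using TensorProduct.induction_on with
  | zero => simp
  | tmul a b =>
    have hswap : swap23 k H (a ⊗ₜ[k] Coalgebra.comul (R := k) b) =
        a ⊗ₜ swapT k H (Coalgebra.comul (R := k) b) := by
      simp [swap23, swapT]
    have hleg : leg23 k H r = (1 : H) ⊗ₜ[k] r := rfl
    rw [idComul_tmul, hswap, hleg, Algebra.TensorProduct.tmul_mul_tmul,
      Algebra.TensorProduct.tmul_mul_tmul, mul_one, one_mul, hr b]
  | add x y hx hy => rw [map_add, map_add, add_mul, mul_add, hx, hy]

lemma commute_leg12_comulId {z : H ⊗[k] H}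
    (hz : ∀ h : H, z * Coalgebra.comul (R := k) h = Coalgebra.comul (R := k) h * z)
    (x : H ⊗[k] H) : Commute (leg12 k H z) (comulId k H x) := by
  induction x using TensorProduct.induction_on with
  | zero => exact Commute.zero_right _
  | tmul a b =>
    rw [leg12_eq_assoc, comulId_tmul]
    refine Commute.map (f := Algebra.TensorProduct.assoc k k k H H H) ?_
    change _ * _ = _ * _
    rw [Algebra.TensorProduct.tmul_mul_tmul, Algebra.TensorProduct.tmul_mul_tmul, hz a,
      one_mul, mul_one]
  | add x y hx hy => rw [map_add]; exact hx.add_right hy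

namespace PreCartier

variable (P : PreCartier k H)

lemma map_Rinv_mul_map_R (leg : H ⊗[k] H →ₐ[k] H ⊗[k] (H ⊗[k] H)) :
    leg P.Rinv * leg P.R = 1 := by
  rw [← map_mul, P.inv_mul, map_one]

lemma conj_leg23_chi13_eq_conj_leg12 :
    leg23 k H P.Rinv * leg13 k H P.χ * leg23 k H P.R =
      leg12 k H P.Rinv * leg13 k H P.χ * leg12 k H P.R := by
  set χ₁₂ := leg12 k H P.χ
  set χ₁₃ := leg13 k H P.χ
  set R₁₃ := leg13 k H P.R
  set R₂₃ := leg23 k H P.R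
  set χ₁₃' := leg12 k H P.Rinv * χ₁₃ * leg12 k H P.R
  have hflip : swap23 k H (idComul k H P.χ) = χ₁₃ + leg13 k H P.Rinv * χ₁₂ * R₁₃ := by
    rw [P.chi_hex1, map_add, map_mul, map_mul, swap23_leg12, swap23_leg12, swap23_leg13,
      swap23_leg12]
  have hcomm : Commute χ₁₂ (R₁₃ * R₂₃) := by
    rw [← P.hex2]
    exact commute_leg12_comulId P.chi_comm P.R
  have hmid : leg13 k H P.Rinv * χ₁₂ * R₁₃ * R₂₃ = R₂₃ * χ₁₂ := by
    rw [mul_assoc, mul_assoc, hcomm.eq, ← mul_assoc, ← mul_assoc, P.map_Rinv_mul_map_R, one_mul]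
  have hintertwine : χ₁₃ * R₂₃ = R₂₃ * χ₁₃' := by
    have h := swap23_idComul_mul_leg23 P.quasi_cocomm P.χ
    rw [hflip, add_mul, hmid, P.chi_hex1, mul_add, add_comm] at h
    exact add_left_cancel h
  calc leg23 k H P.Rinv * χ₁₃ * R₂₃ = leg23 k H P.Rinv * R₂₃ * χ₁₃' := by
        rw [mul_assoc, hintertwine, mul_assoc]
    _ = χ₁₃' := by rw [P.map_Rinv_mul_map_R, one_mul]

end PreCartier

/-- the infinitesimal `R`-matrix of a pre-Cartier quasitriangular bialgebra is a
Hochschild 2-cocycle of the coalgebra `H`: `χ₁₂ + (Δ⊗Id)(χ) = χ₂₃ + (Id⊗Δ)(χ)`. -/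
theorem infinitesimal_R_matrix_is_two_cocycle (P : PreCartier k H) :
    leg12 k H P.χ + comulId k H P.χ = leg23 k H P.χ + idComul k H P.χ := by
  rw [P.chi_hex1, P.chi_hex2, P.conj_leg23_chi13_eq_conj_leg12]
  abel

end
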